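/- arXiv:2403.15835 — 2 statements merged into one kernel-verified Lean document; each statement's English description precedes it below -/
import Mathlib

section
/- Let D ≥ 1 and let p ∈ ℝ^D be a probability vector (all entries nonnegative and summing to 1). Then the variance σ(p) = (1/D) Σ_{k=1}^D (p_k − 1/D)² equals (D−1)/D² if and only if p is a one-hot vector, i.e., p = e_k for some k ∈ {1,…,D}. -/
/-!
Expanding the square, `∑ (p k - 1/D)² = ∑ p k² - 1/D` for a probability vector, so the variance
equals `(D - 1)/D²` exactly when `∑ p k² = 1 = ∑ p k`. Since `0 ≤ p k ≤ 1` gives `p k² ≤ p k`, this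
forces `p k² = p k`, i.e. every entry is `0` or `1`, and a `{0, 1}`-vector summing to `1` is one-hot.
-/

open Finset

section ProbabilityVector

variable {ι : Type*} [Fintype ι] {p : ι → ℝ}

lemma sum_sub_sq_of_sum_eq_one (hsum : ∑ k, p k = 1) (c : ℝ) :
    ∑ k, (p k - c) ^ 2 = ∑ k, p k ^ 2 - 2 * c + Fintype.card ι * c ^ 2 := by
  simp only [sub_sq, sum_add_distrib, sum_sub_distrib, ← sum_mul, ← mul_sum, hsum, sum_const,
    card_univ, nsmul_eq_mul]
  ring

lemma apply_le_one_of_sum_eq_one (hnn : ∀ k, 0 ≤ p k) (hsum : ∑ k, p k = 1) (k : ι) :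
    p k ≤ 1 :=
  hsum ▸ single_le_sum (fun j _ ↦ hnn j) (mem_univ k)

lemma sq_eq_self_of_sum_sq_eq_one (hnn : ∀ k, 0 ≤ p k) (hsum : ∑ k, p k = 1)
    (hsq : ∑ k, p k ^ 2 = 1) (k : ι) : p k ^ 2 = p k := by
  have hle : ∀ j ∈ univ, p j ^ 2 ≤ p j := fun j _ ↦ by
    nlinarith [hnn j, apply_le_one_of_sum_eq_one hnn hsum j]
  exact (sum_eq_sum_iff_of_le hle).1 (hsq.trans hsum.symm) k (mem_univ k)

lemma exists_eq_one_of_sq_eq_self (hsum : ∑ k, p k = 1) (hsq : ∀ k, p k ^ 2 = p k) :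
    ∃ k, p k = 1 := by
  obtain ⟨k, -, hk⟩ := exists_ne_zero_of_sum_ne_zero (hsum ▸ one_ne_zero : ∑ k, p k ≠ 0)
  exact ⟨k, by simpa [sq, hk] using hsq k⟩

lemma eq_ite_of_apply_eq_one [DecidableEq ι] (hnn : ∀ k, 0 ≤ p k) (hsum : ∑ k, p k = 1)
    {k : ι} (hk : p k = 1) (j : ι) : p j = if j = k then 1 else 0 := by
  split_ifs with hjk
  · exact hjk ▸ hk
  · have hrest : ∑ i ∈ univ.erase k, p i = 0 := by
      linarith [add_sum_erase univ p (mem_univ k)]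
    exact (sum_eq_zero_iff_of_nonneg fun i _ ↦ hnn i).1 hrest j (mem_erase.2 ⟨hjk, mem_univ j⟩)

lemma sum_sq_eq_one_iff_exists_eq_ite [DecidableEq ι] (hnn : ∀ k, 0 ≤ p k)
    (hsum : ∑ k, p k = 1) :
    ∑ k, p k ^ 2 = 1 ↔ ∃ k, ∀ j, p j = if j = k then 1 else 0 := by
  constructor
  · intro hsq
    obtain ⟨k, hk⟩ := exists_eq_one_of_sq_eq_self hsum (sq_eq_self_of_sum_sq_eq_one hnn hsum hsq)
    exact ⟨k, eq_ite_of_apply_eq_one hnn hsum hk⟩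
  · rintro ⟨k, hk⟩
    simp [hk, ite_pow]

end ProbabilityVector

theorem variance_eq_iff_onehot_general (D : ℕ) (p : Fin D → ℝ)
    (hnn : ∀ k, 0 ≤ p k) (hsum : ∑ k, p k = 1) :
    (1 / (D : ℝ)) * ∑ k, (p k - 1 / (D : ℝ)) ^ 2 = ((D : ℝ) - 1) / (D : ℝ) ^ 2 ↔
      ∃ k, ∀ j, p j = if j = k then 1 else 0 := by
  have hD : (D : ℝ) ≠ 0 := Nat.cast_ne_zero.2 <| by rintro rfl; simp at hsum
  rw [← sum_sq_eq_one_iff_exists_eq_ite hnn hsum, sum_sub_sq_of_sum_eq_one hsum,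
    Fintype.card_fin]
  set S := ∑ k, p k ^ 2
  have hvar :
      1 / (D : ℝ) * (S - 2 * (1 / D) + D * (1 / D) ^ 2) = (S - 1) / D + (D - 1) / D ^ 2 := by
    field_simp
    ring
  rw [hvar, add_eq_right, div_eq_zero_iff, sub_eq_zero, or_iff_left hD]

/-- The variance of a probability vector equals (D-1)/D² iff it is one-hot. -/
theorem variance_eq_iff_onehot (D : ℕ) (hD : 1 ≤ D) (p : Fin D → ℝ)
    (hnn : ∀ k, 0 ≤ p k) (hsum : ∑ k, p k = 1) :
    (1 / (D : ℝ)) * ∑ k, (p k - 1 / (D : ℝ)) ^ 2 = ((D : ℝ) - 1) / (D : ℝ) ^ 2 ↔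
      ∃ k, ∀ j, p j = if j = k then 1 else 0 :=
  variance_eq_iff_onehot_general D p hnn hsum
end

section
/- Let D ≥ 1 and let p ∈ ℝ^D be a probability vector (all entries nonnegative and summing to 1). If the variance σ(p) = (1/D) Σ_{k=1}^D (p_k − 1/D)² equals (D−1)/D², then there exists k ∈ {1,…,D} such that p = e_k. -/
/-!
Since `∑ pₖ = 1`, the variance equals `(∑ pₖ² - 1/D) / D`, so the hypothesis says `∑ pₖ² = 1 = ∑ pₖ`.
Entries of a probability vector lie in `[0, 1]`, where `pₖ² ≤ pₖ`; equality of the sums forces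
`pₖ² = pₖ`, i.e. every entry is `0` or `1`, and the entries summing to `1` leaves exactly one `1`.
-/

open Finset

variable {ι : Type*} [Fintype ι] {p : ι → ℝ}

theorem sum_sq_sub_inv_card_of_sum_eq_one (hsum : ∑ i, p i = 1) :
    ∑ i, (p i - 1 / (Fintype.card ι : ℝ)) ^ 2 = ∑ i, p i ^ 2 - 1 / (Fintype.card ι : ℝ) := by
  have hcard : (Fintype.card ι : ℝ) ≠ 0 := by
    rintro h
    simp_all [Fintype.card_eq_zero_iff]
  simp only [sub_sq, sum_add_distrib, sum_sub_distrib, ← sum_mul, ← mul_sum, hsum, sum_const,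
    card_univ, nsmul_eq_mul]
  field_simp
  ring

theorem eq_zero_or_eq_one_of_sum_sq_eq_sum (hnn : ∀ i, 0 ≤ p i) (hle : ∀ i, p i ≤ 1)
    (h : ∑ i, p i ^ 2 = ∑ i, p i) (i : ι) : p i = 0 ∨ p i = 1 := by
  have hgap : ∑ j, (p j - p j ^ 2) = 0 := by rw [sum_sub_distrib, h, sub_self]
  have hterm : p i - p i ^ 2 = 0 :=
    (sum_eq_zero_iff_of_nonneg fun j _ => by nlinarith [hnn j, hle j]).mp hgap i (mem_univ i)
  have : p i * (1 - p i) = 0 := by linear_combination hterm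
  rcases mul_eq_zero.mp this with h0 | h1
  · exact .inl h0
  · exact .inr (by linarith)

theorem exists_eq_ite_of_sum_eq_one [DecidableEq ι] (h01 : ∀ i, p i = 0 ∨ p i = 1)
    (hsum : ∑ i, p i = 1) : ∃ k, ∀ j, p j = if j = k then 1 else 0 := by
  have hcount : #{i | p i = 1} = 1 := by
    have hind : ∑ i, p i = ∑ i, if p i = 1 then (1 : ℝ) else 0 :=
      sum_congr rfl fun i _ => by rcases h01 i with h | h <;> simp [h]
    rw [hind, sum_boole] at hsum
    exact_mod_cast hsum
  obtain ⟨k, hk⟩ := card_eq_one.mp hcount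
  refine ⟨k, fun j => ?_⟩
  have hj : p j = 1 ↔ j = k := by simpa using Finset.ext_iff.mp hk j
  rcases h01 j with h | h <;> simp_all

theorem onehot_of_variance_eq_general (D : ℕ) (p : Fin D → ℝ)
    (hnn : ∀ k, 0 ≤ p k) (hsum : ∑ k, p k = 1)
    (hvar : (1 / (D : ℝ)) * ∑ k, (p k - 1 / (D : ℝ)) ^ 2 = ((D : ℝ) - 1) / (D : ℝ) ^ 2) :
    ∃ k, ∀ j, p j = if j = k then 1 else 0 := by
  have hD : (D : ℝ) ≠ 0 := by
    rintro h
    obtain rfl : D = 0 := by exact_mod_cast h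
    simp at hsum
  have hsq : ∑ k, p k ^ 2 = 1 := by
    have := sum_sq_sub_inv_card_of_sum_eq_one hsum
    rw [Fintype.card_fin] at this
    rw [this] at hvar
    field_simp at hvar
    exact mul_left_cancel₀ hD (by linarith)
  have hle : ∀ k, p k ≤ 1 := fun k =>
    hsum ▸ single_le_sum (fun j _ => hnn j) (mem_univ k)
  exact exists_eq_ite_of_sum_eq_one
    (eq_zero_or_eq_one_of_sum_sq_eq_sum hnn hle (hsq.trans hsum.symm)) hsum

/-- If a probability vector has variance (D-1)/D², then it is one-hot. -/
theorem onehot_of_variance_eq (D : ℕ) (hD : 1 ≤ D) (p : Fin D → ℝ)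
    (hnn : ∀ k, 0 ≤ p k) (hsum : ∑ k, p k = 1)
    (hvar : (1 / (D : ℝ)) * ∑ k, (p k - 1 / (D : ℝ)) ^ 2 = ((D : ℝ) - 1) / (D : ℝ) ^ 2) :
    ∃ k, ∀ j, p j = if j = k then 1 else 0 :=
  onehot_of_variance_eq_general D p hnn hsum hvar
end
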